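/- arXiv:2102.10173 — 2 statements merged into one kernel-verified Lean document; each statement's English description precedes it below -/
import Mathlib

section
/- Let (b₀,b₁,…) be a sequence of integers, let m ≥ 1 be the least index with b_m ∈ {0,1,−1}, and suppose b_m = 0. Let (v_n) and (v'_n) be the sequences of convergents of [b₀,b₁,…] and of Φ(b₀,b₁,…) respectively. Then v'_n = v_n for 0 ≤ n ≤ m−2, and v'_n = v_{n+2} for n ≥ m−1. -/
open Filter Topology OnePoint

/-- The Möbius map `z ↦ b - 1/z` on the one-point compactification `ℝ∞` of `ℝ`. -/
noncomputable def mob (b : ℤ) (z : OnePoint ℝ) : OnePoint ℝ :=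
  Option.elim z ((b : ℝ) : OnePoint ℝ)
    (fun x => if x = 0 then (∞ : OnePoint ℝ) else (((b : ℝ) - 1 / x : ℝ) : OnePoint ℝ))

/-- Value of a finite continued fraction `[b₀, …, b_m]`, i.e. `s₀(s₁(⋯ s_m(∞)))`. -/
noncomputable def cfVal : List ℤ → OnePoint ℝ
  | [] => ∞
  | b :: t => mob b (cfVal t)

/-- The `n`th convergent `v_n = S_n(∞)` of the continued fraction `[b₀, b₁, …]`. -/
noncomputable def cfConv (b : ℕ → ℤ) (n : ℕ) : OnePoint ℝ :=
  cfVal ((List.range (n + 1)).map b)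

/-- `m` is a positive index at which the coefficient is `0`, `1` or `-1`. -/
def badIdx (b : ℕ → ℤ) (m : ℕ) : Prop :=
  1 ≤ m ∧ (b m = 0 ∨ b m = 1 ∨ b m = -1)

instance (b : ℕ → ℤ) : DecidablePred (badIdx b) := fun m => by
  unfold badIdx; infer_instance

-- The singularization map `Φ` on integer sequences.
open Classical in
noncomputable def Phi (b : ℕ → ℤ) : ℕ → ℤ :=
  if h : ∃ m, badIdx b m then
    let m := Nat.find h
    if b m = 0 then
      fun k => if k + 1 < m then b k
        else if k = m - 1 then b (m - 1) + b (m + 1)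
        else b (k + 2)
    else if b m = 1 then
      fun k => if k + 1 < m then b k
        else if k = m - 1 then b (m - 1) - 1
        else if k = m then b (m + 1) - 1
        else b (k + 1)
    else
      fun k => if k + 1 < m then b k
        else if k = m - 1 then b (m - 1) + 1
        else if k = m then b (m + 1) + 1
        else b (k + 1)
  else b

-- `p(b) ∈ ℕ ∪ {∞}`: the least positive index at which `0`, `1` or `-1` occurs.
open Classical in
noncomputable def pIdx (b : ℕ → ℤ) : ℕ∞ :=
  if h : ∃ m, badIdx b m then (Nat.find h : ℕ∞) else ⊤

/-- `p⁽ⁿ⁾ → ∞` as `n → ∞`. -/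
def PTendsToTop (b : ℕ → ℤ) : Prop :=
  ∀ N : ℕ, ∃ M : ℕ, ∀ n ≥ M, (N : ℕ∞) < pIdx (Phi^[n] b)

/-- `p = liminf pⁿ`, as a natural number (junk value if the liminf is `∞`). -/
noncomputable def pLim (b : ℕ → ℤ) : ℕ :=
  (Filter.liminf (fun n => pIdx (Phi^[n] b)) Filter.atTop).toNat

/-- `q⁽ⁿ⁾ = |b⁽ⁿ⁾_{p-1}|`. -/
noncomputable def qSeq (b : ℕ → ℤ) (n : ℕ) : ℕ :=
  ((Phi^[n] b) (pLim b - 1)).natAbs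

/-- Two continued fractions have the same tail. -/
def SameTail (b c : ℕ → ℤ) : Prop := ∃ r s : ℕ, ∀ k : ℕ, b (r + k) = c (s + k)

/-- `bstar` is the limit continued fraction: each coefficient of `Φⁿ(b)` stabilises on it. -/
def EventuallyCoeff (b bstar : ℕ → ℤ) : Prop :=
  ∀ k : ℕ, ∃ N : ℕ, ∀ n ≥ N, Phi^[n] b k = bstar k

/-- The point of `ℝ∞` represented by the integer fraction `a/b` (`∞` when `b = 0`). -/
noncomputable def intPt (a b : ℤ) : OnePoint ℝ :=
  if b = 0 then ∞ else (((a : ℝ) / (b : ℝ)) : OnePoint ℝ)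

/-- Adjacency in the Farey graph: `x = a/b`, `y = c/d` with `ad - bc = ±1`. -/
def FareyAdj (x y : OnePoint ℝ) : Prop :=
  ∃ a b c d : ℤ, x = intPt a b ∧ y = intPt c d ∧
    (a * d - b * c = 1 ∨ a * d - b * c = -1)

/-- `x` is an extended rational, i.e. a member of `ℚ∞ = ℚ ∪ {∞} ⊆ ℝ∞`. -/
def IsExtRat (x : OnePoint ℝ) : Prop :=
  x = ∞ ∨ ∃ q : ℚ, x = ((q : ℝ) : OnePoint ℝ)

-- One step of the index-tracking sequence, for the current coefficient sequence `c`.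
open Classical in
noncomputable def eStep (c : ℕ → ℤ) (e : ℕ) : Option ℕ :=
  if h : ∃ m, badIdx c m then
    let m := Nat.find h
    if c m = 0 then
      if e + 2 ≤ m then Option.some e
      else if e = m - 1 ∨ e = m then (none : Option ℕ)
      else Option.some (e - 2)
    else
      if e + 2 ≤ m then Option.some e
      else if e = m - 1 then (none : Option ℕ)
      else Option.some (e - 1)
  else Option.some e

/-- The index-tracking sequence `e⁽⁰⁾(k), e⁽¹⁾(k), …` (`none` once it has terminated). -/
noncomputable def eSeq (b : ℕ → ℤ) (k : ℕ) : ℕ → Option ℕ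
  | 0 => Option.some k
  | n + 1 => (eSeq b k n).bind (eStep (Phi^[n] b))

lemma mob_infty' (b : ℤ) : mob b ∞ = ((b : ℝ) : OnePoint ℝ) := rfl

lemma mob_coe' (b : ℤ) (x : ℝ) :
    mob b ((x : ℝ) : OnePoint ℝ) =
      if x = 0 then (∞ : OnePoint ℝ) else (((b : ℝ) - 1 / x : ℝ) : OnePoint ℝ) := rfl

lemma mob_zero_comp (c d : ℤ) (z : OnePoint ℝ) :
    mob c (mob 0 (mob d z)) = mob (c + d) z := by
  cases z with
  | infty =>
    show mob c (mob 0 (mob d ∞)) = mob (c + d) ∞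
    rw [mob_infty', mob_infty', mob_coe']
    by_cases hd : (d : ℝ) = 0
    · rw [if_pos hd, mob_infty']
      have : d = 0 := by exact_mod_cast hd
      simp [this]
    · rw [if_neg hd, mob_coe', if_neg (by simpa using hd)]
      congr 1
      push_cast
      field_simp
      ring
  | coe x =>
    show mob c (mob 0 (mob d (x : ℝ))) = mob (c + d) (x : ℝ)
    by_cases hx : x = 0
    · subst hx
      rw [mob_coe', if_pos rfl, mob_infty', mob_coe', if_pos (by norm_num),
        mob_coe', if_pos rfl]
    · rw [mob_coe', if_neg hx, mob_coe', mob_coe', if_neg hx]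
      set w : ℝ := (d : ℝ) - 1 / x with hw
      by_cases hw0 : w = 0
      · rw [if_pos hw0, mob_infty']
        congr 1
        have : (d : ℝ) = 1 / x := by linarith [hw0, hw ▸ hw0]
        push_cast
        rw [this]; ring
      · rw [if_neg hw0, mob_coe', if_neg (by simp [hw0])]
        congr 1
        push_cast
        have h1 : (0 : ℝ) - 1 / w = -(w⁻¹) := by rw [one_div]; ring
        rw [h1, one_div, inv_neg, inv_inv, hw]
        ring

lemma cfVal_append (l₁ l₂ : List ℤ) :
    cfVal (l₁ ++ l₂) = l₁.foldr mob (cfVal l₂) := by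
  induction l₁ with
  | nil => rfl
  | cons a t ih => simp [cfVal, ih]

lemma cfVal_cons (a : ℤ) (l : List ℤ) : cfVal (a :: l) = mob a (cfVal l) := rfl

/-- **Lemma 5, case `b_m = 0`.** If `m ≥ 1` is the least index with `b_m ∈ {0, 1, -1}` and
`b_m = 0`, then the convergents of `Φ(b)` are `v₀, …, v_{m-2}, v_{m+1}, v_{m+2}, …`. -/
theorem stmt11 (b : ℕ → ℤ) (m : ℕ) (hm : 1 ≤ m)
    (hmin : ∀ j : ℕ, 1 ≤ j → j < m → ¬ (b j = 0 ∨ b j = 1 ∨ b j = -1))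
    (hbm : b m = 0) :
    (∀ n : ℕ, n + 2 ≤ m → cfConv (Phi b) n = cfConv b n) ∧
    (∀ n : ℕ, m ≤ n + 1 → cfConv (Phi b) n = cfConv b (n + 2)) := by
  classical
  have hex : ∃ j, badIdx b j := ⟨m, hm, Or.inl hbm⟩
  have hfind : Nat.find hex = m := by
    rw [Nat.find_eq_iff]
    exact ⟨⟨hm, Or.inl hbm⟩, fun j hj hbad => hmin j hbad.1 hj hbad.2⟩
  have hPhi : ∀ k, Phi b k =
      if k + 1 < m then b k
      else if k = m - 1 then b (m - 1) + b (m + 1)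
      else b (k + 2) := by
    intro k
    simp [Phi, dif_pos hex, hfind, hbm]
  constructor
  · intro n hn
    unfold cfConv
    congr 1
    apply List.map_congr_left
    intro k hk
    rw [List.mem_range] at hk
    rw [hPhi k, if_pos (by omega)]
  · intro n hn
    obtain ⟨p, rfl⟩ : ∃ p, m = p + 1 := ⟨m - 1, by omega⟩
    set t : ℕ := n - p with ht
    have hn1 : n + 1 = p + (1 + t) := by omega
    have hn3 : n + 2 + 1 = p + (3 + t) := by omega
    have hA : (List.range p).map (Phi b) = (List.range p).map b := by
      apply List.map_congr_left
      intro k hk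
      rw [List.mem_range] at hk
      rw [hPhi k, if_pos (by omega)]
    have hT : ∀ f : ℕ → ℤ, (∀ k < t, f k = b (p + 3 + k)) →
        (List.range t).map f = (List.range t).map (fun j => b (p + 3 + j)) := by
      intro f hf
      apply List.map_congr_left
      intro k hk
      rw [List.mem_range] at hk
      exact hf k hk
    have L1 : (List.range (n + 1)).map (Phi b) =
        (List.range p).map b ++
          ((b p + b (p + 2)) :: (List.range t).map (fun j => b (p + 3 + j))) := by
      rw [hn1, List.range_add, List.map_append, hA, List.map_map]
      congr 1
      rw [List.range_add, List.map_append, List.map_map]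
      rw [show List.range 1 = [0] from rfl]
      simp only [List.map_cons, List.map_nil, Function.comp_apply, List.singleton_append]
      congr 1
      · rw [hPhi, if_neg (by omega), if_pos (by omega)]
        congr 2
      · apply hT
        intro k hk
        simp only [Function.comp_apply]
        rw [hPhi, if_neg (by omega), if_neg (by omega)]
        congr 1
        omega
    have L2 : (List.range (n + 2 + 1)).map b =
        (List.range p).map b ++
          (b p :: b (p + 1) :: b (p + 2) ::
            (List.range t).map (fun j => b (p + 3 + j))) := by
      rw [hn3, List.range_add, List.map_append, List.map_map]
      congr 1
      rw [List.range_add, List.map_append, List.map_map]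
      rw [show List.range 3 = [0, 1, 2] from rfl]
      simp only [List.map_cons, List.map_nil, Function.comp_apply, List.cons_append,
        List.nil_append]
      congr 3
      apply hT
      intro k hk
      simp only [Function.comp_apply]
      congr 1
      omega
    unfold cfConv
    rw [L1, L2, cfVal_append, cfVal_append]
    congr 1
    rw [cfVal_cons, cfVal_cons, cfVal_cons, cfVal_cons, hbm]
    exact (mob_zero_comp (b p) (b (p + 2)) (cfVal ((List.range t).map fun j => b (p + 3 + j)))).symm
end

section
/- Let (b₀,b₁,…) be any sequence of integers and let (v_n) be the sequence of convergents of [b₀,b₁,…]. Then ⟨∞, v₀, v₁, v₂, …⟩ is an infinite path in the Farey graph: ∞ is adjacent to v₀, and v_{n−1} is adjacent to v_n for every n ≥ 1. -/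
/-!
Each map `s_b` is the Möbius transformation of the integer matrix `!![b, -1; 1, 0]` of
determinant `1`, so `S_n` is given by the product `M_n` of these matrices, `v_n` is the quotient
of the first column of `M_n`, and `∞` that of the first column of the empty product. Since
`M_{n+1} = M_n · !![b_{n+1}, -1; 1, 0]`, the first columns of `M_n` and `M_{n+1}` form a matrix
with the same determinant as `M_n`, namely `1`: consecutive convergents are Farey neighbours.
-/

open Filter Topology OnePoint

def mobMat (x : ℤ) : Matrix (Fin 2) (Fin 2) ℤ := !![x, -1; 1, 0]

def cfMat (l : List ℤ) : Matrix (Fin 2) (Fin 2) ℤ := (l.map mobMat).prod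

lemma cfMat_cons (x : ℤ) (l : List ℤ) : cfMat (x :: l) = mobMat x * cfMat l := by
  simp [cfMat]

lemma cfMat_append_singleton (l : List ℤ) (x : ℤ) :
    cfMat (l ++ [x]) = cfMat l * mobMat x := by
  simp [cfMat]

lemma det_cfMat (l : List ℤ) : (cfMat l).det = 1 := by
  induction l with
  | nil => simp [cfMat]
  | cons x l ih =>
    rw [cfMat_cons, Matrix.det_mul, ih, mobMat, Matrix.det_fin_two_of]
    ring

lemma mob_intPt (x : ℤ) {a c : ℤ} (h : a ≠ 0 ∨ c ≠ 0) :
    mob x (intPt a c) = intPt (x * a - c) a := by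
  by_cases hc : c = 0
  · have ha : (a : ℝ) ≠ 0 := by simpa [hc] using h
    simp only [intPt, hc, if_true, Int.cast_eq_zero.not.mp ha, if_false]
    change ((x : ℝ) : OnePoint ℝ) = _
    congr 1
    push_cast
    field_simp
    ring
  · have hc' : (c : ℝ) ≠ 0 := by exact_mod_cast hc
    simp only [intPt, hc, if_false]
    change (if (a : ℝ) / c = 0 then ∞ else (((x : ℝ) - 1 / ((a : ℝ) / c) : ℝ) : OnePoint ℝ)) = _
    by_cases ha : a = 0
    · simp [ha]
    · have ha' : (a : ℝ) ≠ 0 := by exact_mod_cast ha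
      rw [if_neg (div_ne_zero ha' hc'), if_neg ha]
      congr 1
      push_cast
      field_simp

lemma cfVal_eq_intPt (l : List ℤ) : cfVal l = intPt (cfMat l 0 0) (cfMat l 1 0) := by
  induction l with
  | nil => simp [cfVal, cfMat, intPt]
  | cons x l ih =>
    have hcol : cfMat l 0 0 ≠ 0 ∨ cfMat l 1 0 ≠ 0 := by
      by_contra! h0
      simpa [Matrix.det_fin_two, h0] using det_cfMat l
    rw [cfVal, ih, mob_intPt x hcol, cfMat_cons]
    simp [mobMat, Matrix.mul_apply, Fin.sum_univ_two, sub_eq_add_neg]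

lemma fareyAdj_cfVal_append_singleton (l : List ℤ) (x : ℤ) :
    FareyAdj (cfVal l) (cfVal (l ++ [x])) := by
  refine ⟨_, _, _, _, cfVal_eq_intPt l, cfVal_eq_intPt (l ++ [x]), Or.inl ?_⟩
  have hdet := det_cfMat l
  rw [Matrix.det_fin_two] at hdet
  simp only [cfMat_append_singleton, mobMat, Matrix.mul_apply, Fin.sum_univ_two, Matrix.of_apply,
    Matrix.cons_val', Matrix.cons_val_zero, Matrix.cons_val_one, Matrix.cons_val_fin_one]
  linear_combination hdet

/-- The convergents of any integer continued fraction form an infinite path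
`⟨∞, v₀, v₁, …⟩` in the Farey graph. -/
theorem stmt19 (b : ℕ → ℤ) :
    FareyAdj ∞ (cfConv b 0) ∧ ∀ n : ℕ, FareyAdj (cfConv b n) (cfConv b (n + 1)) := by
  refine ⟨fareyAdj_cfVal_append_singleton [] (b 0), fun n => ?_⟩
  rw [cfConv, cfConv, List.range_succ (n := n + 1), List.map_append]
  exact fareyAdj_cfVal_append_singleton _ _
end
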